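/- arXiv:2504.09884 — 3 statements merged into one kernel-verified Lean document; each statement's English description precedes it below -/
import Mathlib

section
/- The union of an arbitrary family of languages controllable with respect to G is controllable with respect to G; consequently, for any language L, the family C(L) of controllable sublanguages of L contains a unique supremal element sup C(L) = ∪{L' | L' ∈ C(L)}. -/
def prefixClosure {S : Type*} (L : Set (List S)) : Set (List S) :=
  {s₁ | ∃ s ∈ L, s₁ <+: s}

/-- `K` is controllable w.r.t. a plant with closed behavior `Lg` and
uncontrollable events `Su`: `\overline{K}·Su ∩ Lg ⊆ \overline{K}`. -/
def Controllable {S : Type*} (K Lg : Set (List S)) (Su : Set S) : Prop :=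
  {w | ∃ s ∈ prefixClosure K, ∃ σ ∈ Su, w = s ++ [σ]} ∩ Lg ⊆ prefixClosure K

/-- The family of controllable sublanguages of `L`. -/
def CtrlFamily {S : Type*} (L Lg : Set (List S)) (Su : Set S) : Set (Set (List S)) :=
  {K | K ⊆ L ∧ Controllable K Lg Su}

/-- The supremal controllable sublanguage of `L`. -/
def supC {S : Type*} (L Lg : Set (List S)) (Su : Set S) : Set (List S) :=
  ⋃₀ CtrlFamily L Lg Su

section

variable {S : Type*} {Lg : Set (List S)} {Su : Set S}

theorem mem_prefixClosure_sUnion {F : Set (Set (List S))} {s : List S} :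
    s ∈ prefixClosure (⋃₀ F) ↔ ∃ K ∈ F, s ∈ prefixClosure K := by
  constructor
  · rintro ⟨t, ⟨K, hKF, htK⟩, hst⟩
    exact ⟨K, hKF, t, htK, hst⟩
  · rintro ⟨K, hKF, t, htK, hst⟩
    exact ⟨t, ⟨K, hKF, htK⟩, hst⟩

theorem controllable_iff {K : Set (List S)} :
    Controllable K Lg Su ↔
      ∀ s ∈ prefixClosure K, ∀ σ ∈ Su, s ++ [σ] ∈ Lg → s ++ [σ] ∈ prefixClosure K := by
  constructor
  · intro hK s hs σ hσ hLg
    exact hK ⟨⟨s, hs, σ, hσ, rfl⟩, hLg⟩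
  · rintro hK _ ⟨⟨s, hs, σ, hσ, rfl⟩, hLg⟩
    exact hK s hs σ hσ hLg

theorem Controllable.sUnion {F : Set (Set (List S))} (hF : ∀ K ∈ F, Controllable K Lg Su) :
    Controllable (⋃₀ F) Lg Su := by
  rw [controllable_iff]
  intro s hs σ hσ hLg
  obtain ⟨K, hKF, hsK⟩ := mem_prefixClosure_sUnion.mp hs
  exact mem_prefixClosure_sUnion.mpr ⟨K, hKF, controllable_iff.mp (hF K hKF) s hsK σ hσ hLg⟩

theorem supC_mem_ctrlFamily (L : Set (List S)) : supC L Lg Su ∈ CtrlFamily L Lg Su :=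
  ⟨Set.sUnion_subset fun _ hK => hK.1, Controllable.sUnion fun _ hK => hK.2⟩

theorem subset_supC {L K : Set (List S)} (hK : K ∈ CtrlFamily L Lg Su) : K ⊆ supC L Lg Su :=
  Set.subset_sUnion_of_mem hK

end

theorem sUnion_controllable_and_supC {S : Type*} (Lg : Set (List S)) (Su : Set S) :
    (∀ (F : Set (Set (List S))), (∀ K ∈ F, Controllable K Lg Su) →
      Controllable (⋃₀ F) Lg Su) ∧
    (∀ L : Set (List S), supC L Lg Su ∈ CtrlFamily L Lg Su ∧
      ∀ K ∈ CtrlFamily L Lg Su, K ⊆ supC L Lg Su) :=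
  ⟨fun _ => Controllable.sUnion, fun L => ⟨supC_mem_ctrlFamily L, fun _ => subset_supC⟩⟩
end

section
/- If L is prefix-closed, then sup C(L) is prefix-closed. -/
/-! Controllability of `K` depends only on the prefix closure of `K`, so the prefix closure of a
controllable sublanguage of a closed `L` is again one; hence every prefix of a word of `supC L`
lies in `supC L`. -/

section Controllability

variable {S : Type*}

lemma subset_prefixClosure (K : Set (List S)) : K ⊆ prefixClosure K :=
  fun s hs => ⟨s, hs, List.prefix_refl s⟩

lemma prefixClosure_mono {K L : Set (List S)} (h : K ⊆ L) :
    prefixClosure K ⊆ prefixClosure L :=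
  fun _ ⟨t, ht, hp⟩ => ⟨t, h ht, hp⟩

lemma prefixClosure_prefixClosure (K : Set (List S)) :
    prefixClosure (prefixClosure K) = prefixClosure K := by
  refine Set.Subset.antisymm ?_ (subset_prefixClosure _)
  rintro s ⟨t, ⟨u, hu, htu⟩, hst⟩
  exact ⟨u, hu, hst.trans htu⟩

lemma prefixClosure_subset_of_closed {K L : Set (List S)} (hL : prefixClosure L = L)
    (h : K ⊆ L) : prefixClosure K ⊆ L :=
  hL ▸ prefixClosure_mono h

lemma controllable_prefixClosure_iff {K Lg : Set (List S)} {Su : Set S} :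
    Controllable (prefixClosure K) Lg Su ↔ Controllable K Lg Su := by
  rw [Controllable, Controllable, prefixClosure_prefixClosure]

lemma prefixClosure_mem_ctrlFamily {K L Lg : Set (List S)} {Su : Set S}
    (hL : prefixClosure L = L) (hK : K ∈ CtrlFamily L Lg Su) :
    prefixClosure K ∈ CtrlFamily L Lg Su :=
  ⟨prefixClosure_subset_of_closed hL hK.1, controllable_prefixClosure_iff.2 hK.2⟩

end Controllability

theorem supC_closed_of_closed {S : Type*} (L Lg : Set (List S)) (Su : Set S)
    (hL : prefixClosure L = L) :
    prefixClosure (supC L Lg Su) = supC L Lg Su := by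
  refine Set.Subset.antisymm ?_ (subset_prefixClosure _)
  rintro w ⟨s, ⟨K, hK, hsK⟩, hws⟩
  exact ⟨prefixClosure K, prefixClosure_mem_ctrlFamily hL hK, s, hsK, hws⟩
end

section
/- If a natural projection P : Σ* → Σ₀* is a natural observer for a language L_m ⊆ Σ*, and L_m is nonblocking in the sense that a generator's closed behavior L equals \overline{L_m}, then the abstraction is also nonblocking: P(L) = \overline{P(L_m)}. -/
/-- Natural projection onto the subalphabet `A`: erase events not in `A`. -/
def natProj {S : Type*} (A : Set S) [DecidablePred (· ∈ A)] (s : List S) : List S :=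
  s.filter (fun a => decide (a ∈ A))

/-- `natProj A` is a natural observer for `Lm`. -/
def NaturalObserver {S : Type*} (A : Set S) [DecidablePred (· ∈ A)]
    (Lm : Set (List S)) : Prop :=
  ∀ s ∈ prefixClosure Lm, ∀ t : List S, (∀ a ∈ t, a ∈ A) →
    natProj A s ++ t ∈ natProj A '' Lm →
    ∃ u : List S, s ++ u ∈ Lm ∧ natProj A (s ++ u) = natProj A s ++ t

theorem image_natProj_prefixClosure {S : Type*} (A : Set S) [DecidablePred (· ∈ A)]
    (L : Set (List S)) : natProj A '' prefixClosure L = prefixClosure (natProj A '' L) := by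
  ext t
  constructor
  · rintro ⟨s, ⟨m, hm, hsm⟩, rfl⟩
    exact ⟨natProj A m, Set.mem_image_of_mem _ hm, hsm.filter _⟩
  · rintro ⟨_, ⟨m, hm, rfl⟩, htm⟩
    obtain ⟨s, hsm, rfl⟩ := List.prefix_filter_iff.mp htm
    exact ⟨s, ⟨m, hm, hsm⟩, rfl⟩

theorem observer_abstraction_nonblocking_general {S : Type*} (A : Set S)
    [DecidablePred (· ∈ A)] (Lm L : Set (List S))
    (hnb : L = prefixClosure Lm) :
    natProj A '' L = prefixClosure (natProj A '' Lm) := by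
  rw [hnb, image_natProj_prefixClosure]

theorem observer_abstraction_nonblocking {S : Type*} (A : Set S)
    [DecidablePred (· ∈ A)] (Lm L : Set (List S))
    (hobs : NaturalObserver A Lm) (hnb : L = prefixClosure Lm) :
    natProj A '' L = prefixClosure (natProj A '' Lm) :=
  observer_abstraction_nonblocking_general A Lm L hnb
end
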